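/- If f and g are nonzero elements of a Hardy field (germs at infinity of real functions closed under arithmetic operations and differentiation, forming a field), then the limit as x → ∞ of log|f(x)| / log|g(x)| exists in the extended reals ℝ ∪ {-∞, +∞}. -/

import Mathlib

/-!
Put `U = log |f|` and `V = log |g|`; their derivatives `f'/f` and `g'/g` lie in the Hardy field.
For real `c` the derivative of `U - c V` is `f'/f - c g'/g = g'/g * ((f'/f) / (g'/g) - c)`, and both
factors have an eventual sign: the second because `(f'/f) / (g'/g)` is eventually monotone, which
matters since the field need not contain `c`. So `U - c V` is eventually monotone, hence of eventual
constant sign, and so is `V`. Thus `U / V - c` has an eventual sign for every real `c`, and a real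
function with this property converges in the extended reals (to the supremum of its eventual lower
bounds).
-/

open Filter

/-- A Hardy field: a subring of the ring of germs at `+∞` of real functions that
forms a field (every nonzero element has a multiplicative inverse in it) and is
closed under differentiation (every element has a representative that is
eventually differentiable and whose derivative again lies in the subring). -/
def IsHardyField (S : Subring (Filter.Germ (Filter.atTop : Filter ℝ) ℝ)) : Prop :=
  (∀ f ∈ S, f ≠ 0 → ∃ g ∈ S, f * g = 1) ∧
  ∀ f ∈ S, ∃ F : ℝ → ℝ,
    ((F : Filter.Germ (Filter.atTop : Filter ℝ) ℝ) = f) ∧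
    (∀ᶠ x in Filter.atTop, DifferentiableAt ℝ F x) ∧
    ((deriv F : Filter.Germ (Filter.atTop : Filter ℝ) ℝ) ∈ S)

open Set SignType Topology

local notation "G∞" => Filter.Germ (Filter.atTop : Filter ℝ) ℝ

theorem sign_div {α : Type*} [Field α] [LinearOrder α] [IsStrictOrderedRing α] (a b : α) :
    sign (a / b) = sign a * sign b := by
  rw [div_eq_mul_inv, sign_mul]
  rcases lt_trichotomy b 0 with hb | rfl | hb
  · rw [sign_neg hb, sign_neg (inv_lt_zero.2 hb)]
  · simp
  · rw [sign_pos hb, sign_pos (inv_pos.2 hb)]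

theorem MonotoneOn.eventuallyConst_atTop {α β : Type*} [SemilatticeSup α] [Nonempty α]
    [LinearOrder β] [Finite β] {g : α → β} {a : α} (hg : MonotoneOn g (Ici a)) :
    EventuallyConst g atTop := by
  obtain ⟨_, ⟨x₀, hx₀, rfl⟩, hmax⟩ :=
    exists_max_image (g '' Ici a) id (toFinite _) (nonempty_Ici.image g)
  refine Filter.eventuallyConst_atTop.2 ⟨x₀, fun y hy => le_antisymm ?_ ?_⟩
  · exact hmax _ ⟨y, le_trans hx₀ hy, rfl⟩
  · exact hg hx₀ (le_trans hx₀ hy) hy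

theorem AntitoneOn.eventuallyConst_atTop {α β : Type*} [SemilatticeSup α] [Nonempty α]
    [LinearOrder β] [Finite β] {g : α → β} {a : α} (hg : AntitoneOn g (Ici a)) :
    EventuallyConst g atTop :=
  hg.dual_right.eventuallyConst_atTop.comp OrderDual.ofDual

theorem monotoneOn_Ici_of_deriv_nonneg {φ : ℝ → ℝ} {a : ℝ}
    (hd : ∀ x ∈ Ici a, DifferentiableAt ℝ φ x) (h : ∀ x ∈ Ici a, 0 ≤ deriv φ x) :
    MonotoneOn φ (Ici a) :=
  monotoneOn_of_deriv_nonneg (convex_Ici a)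
    (fun x hx => (hd x hx).continuousAt.continuousWithinAt)
    (fun x hx => (hd x (interior_subset hx)).differentiableWithinAt)
    (fun x hx => h x (interior_subset hx))

theorem antitoneOn_Ici_of_deriv_nonpos {φ : ℝ → ℝ} {a : ℝ}
    (hd : ∀ x ∈ Ici a, DifferentiableAt ℝ φ x) (h : ∀ x ∈ Ici a, deriv φ x ≤ 0) :
    AntitoneOn φ (Ici a) :=
  antitoneOn_of_deriv_nonpos (convex_Ici a)
    (fun x hx => (hd x hx).continuousAt.continuousWithinAt)
    (fun x hx => (hd x (interior_subset hx)).differentiableWithinAt)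
    (fun x hx => h x (interior_subset hx))

theorem eventuallyConst_sign_of_deriv {φ : ℝ → ℝ} (hd : ∀ᶠ x in atTop, DifferentiableAt ℝ φ x)
    (hs : EventuallyConst (fun x => sign (deriv φ x)) atTop) :
    EventuallyConst (fun x => sign (φ x)) atTop := by
  obtain ⟨s, hs⟩ := eventuallyConst_iff_exists_eventuallyEq.1 hs
  obtain ⟨a, ha⟩ := (hd.and hs).exists_forall_of_atTop
  rcases le_total 0 s with hs0 | hs0
  · refine (sign.monotone.comp_monotoneOn (monotoneOn_Ici_of_deriv_nonneg
      (fun x hx => (ha x hx).1) fun x hx => ?_)).eventuallyConst_atTop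
    exact sign_nonneg_iff.1 (hs0.trans_eq (ha x hx).2.symm)
  · refine (sign.monotone.comp_antitoneOn (antitoneOn_Ici_of_deriv_nonpos
      (fun x hx => (ha x hx).1) fun x hx => ?_)).eventuallyConst_atTop
    exact sign_nonpos_iff.1 ((ha x hx).2.trans_le hs0)

theorem exists_tendsto_of_eventuallyConst_sign_sub {α : Type*} {l : Filter α} {φ : α → ℝ}
    (h : ∀ c : ℝ, EventuallyConst (fun x => sign (φ x - c)) l) :
    ∃ L : EReal, Tendsto (fun x => (φ x : EReal)) l (𝓝 L) := by
  have dichotomy (c : ℝ) : (∀ᶠ x in l, φ x ≤ c) ∨ ∀ᶠ x in l, c ≤ φ x := by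
    obtain ⟨s, hs⟩ := eventuallyConst_iff_exists_eventuallyEq.1 (h c)
    rcases le_total s 0 with hs0 | hs0
    · exact .inl (hs.mono fun x hx => sub_nonpos.1 (sign_nonpos_iff.1 (hx.trans_le hs0)))
    · exact .inr (hs.mono fun x hx => sub_nonneg.1 (sign_nonneg_iff.1 (hs0.trans_eq hx.symm)))
  refine ⟨⨆ c ∈ {c : ℝ | ∀ᶠ x in l, c ≤ φ x}, (c : EReal),
    tendsto_order.2 ⟨fun b hb => ?_, fun b hb => ?_⟩⟩
  · obtain ⟨c, hc, hbc⟩ := lt_biSup_iff.1 hb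
    exact Eventually.mono hc fun x hx => hbc.trans_le (EReal.coe_le_coe_iff.2 hx)
  · obtain ⟨c, hLc, hcb⟩ := EReal.lt_iff_exists_real_btwn.1 hb
    refine ((dichotomy c).resolve_right fun hc => ?_).mono fun x hx =>
      (EReal.coe_le_coe_iff.2 hx).trans_lt hcb
    exact hLc.not_ge (le_biSup (fun c : ℝ => (c : EReal)) hc)

theorem exists_tendsto_div_of_eventuallyConst_sign {α : Type*} {l : Filter α} {U V : α → ℝ}
    (hV : EventuallyConst (fun x => sign (V x)) l)
    (hUV : ∀ c : ℝ, EventuallyConst (fun x => sign (U x - c * V x)) l) :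
    ∃ L : EReal, Tendsto (fun x => ((U x / V x : ℝ) : EReal)) l (𝓝 L) := by
  refine exists_tendsto_of_eventuallyConst_sign_sub fun c => ?_
  obtain ⟨s, hs⟩ := eventuallyConst_iff_exists_eventuallyEq.1 hV
  by_cases hs0 : s = 0
  · refine (EventuallyConst.const (sign (-c))).congr ?_
    filter_upwards [hs] with x hx
    rw [sign_eq_zero_iff.1 (hx.trans hs0), div_zero, zero_sub]
  · refine ((hUV c).mul hV).congr ?_
    filter_upwards [hs] with x hx
    have hVx : V x ≠ 0 := sign_ne_zero.1 (hx.trans_ne hs0)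
    rw [Pi.mul_apply, ← sign_div, sub_div, mul_div_cancel_right₀ _ hVx]

namespace IsHardyField

variable {S : Subring G∞}

theorem exists_eventually_mul_eq_one (hS : IsHardyField S) {H : ℝ → ℝ} (hH : (H : G∞) ∈ S)
    (h0 : (H : G∞) ≠ 0) : ∃ K : ℝ → ℝ, (K : G∞) ∈ S ∧ ∀ᶠ x in atTop, H x * K x = 1 := by
  obtain ⟨k, hk, hHk⟩ := hS.1 _ hH h0
  induction k using Germ.inductionOn with
  | h K => exact ⟨K, hk, Germ.coe_eq.1 hHk⟩

theorem eventually_ne_zero (hS : IsHardyField S) {H : ℝ → ℝ} (hH : (H : G∞) ∈ S)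
    (h0 : (H : G∞) ≠ 0) : ∀ᶠ x in atTop, H x ≠ 0 :=
  let ⟨_, _, hHK⟩ := hS.exists_eventually_mul_eq_one hH h0
  hHK.mono fun _ hx => left_ne_zero_of_mul_eq_one hx

theorem inv_mem (hS : IsHardyField S) {H : ℝ → ℝ} (hH : (H : G∞) ∈ S) (h0 : (H : G∞) ≠ 0) :
    ((H⁻¹ : ℝ → ℝ) : G∞) ∈ S := by
  obtain ⟨K, hK, hHK⟩ := hS.exists_eventually_mul_eq_one hH h0
  convert hK using 1
  exact Germ.coe_eq.2 (hHK.mono fun _ hx => (eq_inv_of_mul_eq_one_right hx).symm)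

theorem eventuallyConst_sign (hS : IsHardyField S) {H : ℝ → ℝ} (hH : (H : G∞) ∈ S) :
    EventuallyConst (fun x => sign (H x)) atTop := by
  by_cases h0 : (H : G∞) = 0
  · refine (EventuallyConst.const 0).congr ?_
    filter_upwards [Germ.coe_eq.1 h0] with x hx
    rw [hx, sign_zero]
  obtain ⟨F, hFH, hFd, -⟩ := hS.2 _ hH
  rw [← hFH] at hH h0
  obtain ⟨a, ha⟩ := (hFd.and (hS.eventually_ne_zero hH h0)).exists_forall_of_atTop
  have hcont : ContinuousOn (fun x => sign (F x)) (Ici a) := fun x hx =>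
    ((continuousAt_sign_of_ne_zero (ha x hx).2).comp (ha x hx).1.continuousAt).continuousWithinAt
  refine (Filter.eventuallyConst_atTop.2 ⟨a, fun x hx =>
    isPreconnected_Ici.constant hcont hx self_mem_Ici⟩).congr ?_
  filter_upwards [Germ.coe_eq.1 hFH] with x hx
  rw [hx]

theorem eventuallyConst_sign_sub_const (hS : IsHardyField S) {H : ℝ → ℝ} (hH : (H : G∞) ∈ S)
    (c : ℝ) : EventuallyConst (fun x => sign (H x - c)) atTop := by
  obtain ⟨F, hFH, hFd, hF'⟩ := hS.2 _ hH
  refine (eventuallyConst_sign_of_deriv (hFd.mono fun x hx => hx.sub_const c) ?_).congr ?_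
  · simpa only [deriv_sub_const] using hS.eventuallyConst_sign hF'
  · filter_upwards [Germ.coe_eq.1 hFH] with x hx
    rw [hx]

theorem eventuallyConst_sign_sub_mul (hS : IsHardyField S) {P Q : ℝ → ℝ} (hP : (P : G∞) ∈ S)
    (hQ : (Q : G∞) ∈ S) (c : ℝ) : EventuallyConst (fun x => sign (P x - c * Q x)) atTop := by
  by_cases hQ0 : (Q : G∞) = 0
  · refine (hS.eventuallyConst_sign hP).congr ?_
    filter_upwards [Germ.coe_eq.1 hQ0] with x hx
    rw [hx, mul_zero, sub_zero]
  have hR : ((P * Q⁻¹ : ℝ → ℝ) : G∞) ∈ S := S.mul_mem hP (hS.inv_mem hQ hQ0)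
  refine ((hS.eventuallyConst_sign hQ).mul (hS.eventuallyConst_sign_sub_const hR c)).congr ?_
  filter_upwards [hS.eventually_ne_zero hQ hQ0] with x hx
  rw [Pi.mul_apply, ← sign_mul]
  congr 1
  simp only [Pi.mul_apply, Pi.inv_apply]
  field_simp

theorem eventuallyConst_sign_sub_mul_of_deriv (hS : IsHardyField S) {U V : ℝ → ℝ}
    (hUd : ∀ᶠ x in atTop, DifferentiableAt ℝ U x) (hVd : ∀ᶠ x in atTop, DifferentiableAt ℝ V x)
    (hU' : (deriv U : G∞) ∈ S) (hV' : (deriv V : G∞) ∈ S) (c : ℝ) :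
    EventuallyConst (fun x => sign (U x - c * V x)) atTop := by
  have hWd := (hUd.and hVd).mono fun x hx => hx.1.sub (hx.2.const_mul c)
  refine eventuallyConst_sign_of_deriv hWd ((hS.eventuallyConst_sign_sub_mul hU' hV' c).congr ?_)
  filter_upwards [hUd, hVd] with x hUx hVx
  rw [deriv_fun_sub hUx (hVx.const_mul c), deriv_const_mul c hVx]

theorem exists_eventuallyEq_log_abs (hS : IsHardyField S) {f : ℝ → ℝ} (hf : (f : G∞) ∈ S)
    (hf0 : (f : G∞) ≠ 0) :
    ∃ U : ℝ → ℝ, (∀ᶠ x in atTop, Real.log |f x| = U x) ∧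
      (∀ᶠ x in atTop, DifferentiableAt ℝ U x) ∧ (deriv U : G∞) ∈ S := by
  obtain ⟨F, hFf, hFd, hF'⟩ := hS.2 _ hf
  rw [← hFf] at hf hf0
  have hlog : ∀ᶠ x in atTop, HasDerivAt (fun y => Real.log (F y)) (deriv F x * (F x)⁻¹) x := by
    filter_upwards [hFd, hS.eventually_ne_zero hf hf0] with x hx hx0
    simpa only [div_eq_mul_inv] using hx.hasDerivAt.log hx0
  refine ⟨fun y => Real.log (F y), ?_, hlog.mono fun x hx => hx.differentiableAt, ?_⟩
  · filter_upwards [Germ.coe_eq.1 hFf] with x hx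
    rw [← hx, Real.log_abs]
  · convert S.mul_mem hF' (hS.inv_mem hf hf0) using 1
    exact Germ.coe_eq.2 (hlog.mono fun x hx => hx.deriv)

end IsHardyField

/-- For nonzero elements `f`, `g` of a Hardy field, the limit of
`log|f(x)| / log|g(x)|` as `x → ∞` exists in the extended reals. -/
theorem hardyField_log_ratio_tendsto
    (S : Subring (Filter.Germ (Filter.atTop : Filter ℝ) ℝ))
    (hS : IsHardyField S) (f g : ℝ → ℝ)
    (hf : (f : Filter.Germ (Filter.atTop : Filter ℝ) ℝ) ∈ S)
    (hg : (g : Filter.Germ (Filter.atTop : Filter ℝ) ℝ) ∈ S)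
    (hf0 : (f : Filter.Germ (Filter.atTop : Filter ℝ) ℝ) ≠ 0)
    (hg0 : (g : Filter.Germ (Filter.atTop : Filter ℝ) ℝ) ≠ 0) :
    ∃ L : EReal,
      Tendsto (fun x : ℝ => ((Real.log |f x| / Real.log |g x| : ℝ) : EReal))
        atTop (nhds L) := by
  obtain ⟨U, hfU, hUd, hU'⟩ := hS.exists_eventuallyEq_log_abs hf hf0
  obtain ⟨V, hgV, hVd, hV'⟩ := hS.exists_eventuallyEq_log_abs hg hg0
  obtain ⟨L, hL⟩ := exists_tendsto_div_of_eventuallyConst_sign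
    (eventuallyConst_sign_of_deriv hVd (hS.eventuallyConst_sign hV'))
    (hS.eventuallyConst_sign_sub_mul_of_deriv hUd hVd hU' hV')
  refine ⟨L, hL.congr' ?_⟩
  filter_upwards [hfU, hgV] with x hx hy
  rw [hx, hy]
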